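/- Let m ≥ 2, a ∈ [0,1], Σ = (1−a)·I + a·J (I the identity, J the all-ones matrix), and U = {ξ ∈ ℝ^m_+ : ξᵀ Σ ξ ≤ 1}. Define: if a ≤ m^{−2/3}, μ = 1/(2·((1−a)³m + (1−a)²am²)^{1/4}), ρ = 1/(4(1−a)μ), and β = √((1/2)·(1 + (1/(1−a))·(am + √((1−a)m + am²)))); if a > m^{−2/3}, μ = 0, ρ = 1/√a, and β = 1/√a. Let v_0 = μ·e and v_i = v_0 + ρ·e_i. Then in both cases: (i) for every ξ ∈ U, Σ_{i=1}^m (ξ_i − μ)_+ ≤ ρ, so Û = conv(v_0,…,v_m) dominates U; and (ii) ρ² + 2(1−a+am)ρμ + (am² + (1−a)m)μ² ≤ β², so (1/β)·v_i ∈ U for every i ∈ {0,…,m}. -/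

import Mathlib

/-!
For `x ∈ ℝ`, `4μ(x - μ)₊ ≤ x²`; summed over a point of `U` and combined with
`(1 - a)‖ξ‖² ≤ 1` this gives `Σ (ξᵢ - μ)₊ ≤ 1 / (4(1 - a)μ)`, while for `μ = 0` the bound
`a (Σ ξᵢ)² ≤ 1` gives `Σ ξᵢ ≤ 1 / √a`. With weights `(ξᵢ - μ)₊ / ρ` on `vᵢ` and the remaining
mass on `v₀`, the point `μ + (ξ - μ)₊` is a convex combination of the vertices.
The quadratic form of `Σ` at `vᵢ` is exactly `ρ² + 2(1 - a + am)ρμ + (am² + (1 - a)m)μ²`, and at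
`v₀` it is smaller. In the first regime `μ` is chosen so that `ρ²` and `(am² + (1 - a)m)μ²` are
equal (both are `√(am² + (1 - a)m) / (4(1 - a))`), and the bound then equals `β²`.
-/

open Matrix

def compoundSymm (ι : Type*) [DecidableEq ι] (a : ℝ) : Matrix ι ι ℝ :=
  (1 - a) • (1 : Matrix ι ι ℝ) + a • Matrix.of fun _ _ => (1 : ℝ)

def nonnegEllipsoid (ι : Type*) [Fintype ι] [DecidableEq ι] (a : ℝ) : Set (ι → ℝ) :=
  {ξ | (∀ i, 0 ≤ ξ i) ∧ ξ ⬝ᵥ compoundSymm ι a *ᵥ ξ ≤ 1}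

def simplexVertex {ι : Type*} [DecidableEq ι] (μ ρ : ℝ) : Option ι → ι → ℝ :=
  fun o => o.elim (fun _ => μ) (fun i => (fun _ => μ) + ρ • Pi.single i 1)

lemma four_mul_mul_max_sub_le_sq (μ x : ℝ) : 4 * μ * max (x - μ) 0 ≤ x ^ 2 := by
  rcases le_total x μ with h | h
  · rw [max_eq_right (sub_nonpos.2 h), mul_zero]
    exact sq_nonneg x
  · rw [max_eq_left (sub_nonneg.2 h)]
    nlinarith [sq_nonneg (x - 2 * μ)]

lemma simplexVertex_nonneg {ι : Type*} [DecidableEq ι] {μ ρ : ℝ} (hμ : 0 ≤ μ) (hρ : 0 ≤ ρ)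
    (o : Option ι) (j : ι) :
    0 ≤ simplexVertex μ ρ o j := by
  cases o with
  | none => exact hμ
  | some i =>
    simp only [simplexVertex, Option.elim_some, Pi.add_apply, Pi.smul_apply, smul_eq_mul]
    have : 0 ≤ (Pi.single i (1 : ℝ) : ι → ℝ) j :=
      (Pi.single_nonneg.2 zero_le_one : (0 : ι → ℝ) ≤ Pi.single i 1) j
    positivity

section

variable {ι : Type*} [Fintype ι] [DecidableEq ι]

lemma dotProduct_compoundSymm_mulVec (a : ℝ) (ξ : ι → ℝ) :
    ξ ⬝ᵥ compoundSymm ι a *ᵥ ξ = (1 - a) * ∑ i, ξ i ^ 2 + a * (∑ i, ξ i) ^ 2 := by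
  have hJ : (Matrix.of fun (_ : ι) (_ : ι) => (1 : ℝ)) *ᵥ ξ = fun _ => ∑ i, ξ i := by
    ext j; simp [mulVec, dotProduct]
  simp only [compoundSymm, add_mulVec, smul_mulVec, one_mulVec, hJ, dotProduct_add,
    dotProduct_smul, smul_eq_mul]
  simp only [dotProduct, sq, ← Finset.sum_mul]

lemma inv_smul_mem_nonnegEllipsoid {a β : ℝ} (hβ : 0 < β) {ξ : ι → ℝ} (hξ : ∀ i, 0 ≤ ξ i)
    (hQ : ξ ⬝ᵥ compoundSymm ι a *ᵥ ξ ≤ β ^ 2) : β⁻¹ • ξ ∈ nonnegEllipsoid ι a := by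
  refine ⟨fun i => smul_nonneg (inv_nonneg.mpr hβ.le) (hξ i), ?_⟩
  rw [mulVec_smul, dotProduct_smul, smul_dotProduct, smul_eq_mul, smul_eq_mul, ← mul_assoc,
    ← sq, inv_pow, inv_mul_le_iff₀ (by positivity), mul_one]
  exact hQ

lemma sum_max_sub_le {a μ : ℝ} (ha0 : 0 ≤ a) (ha1 : a < 1) (hμ : 0 < μ) {ξ : ι → ℝ}
    (hQ : ξ ⬝ᵥ compoundSymm ι a *ᵥ ξ ≤ 1) :
    ∑ i, max (ξ i - μ) 0 ≤ 1 / (4 * (1 - a) * μ) := by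
  rw [dotProduct_compoundSymm_mulVec] at hQ
  have h1a : 0 < 1 - a := sub_pos.2 ha1
  have hsq : (1 - a) * ∑ i, ξ i ^ 2 ≤ 1 := by nlinarith [sq_nonneg (∑ i, ξ i)]
  have hsum : 4 * μ * ∑ i, max (ξ i - μ) 0 ≤ ∑ i, ξ i ^ 2 := by
    rw [Finset.mul_sum]
    exact Finset.sum_le_sum fun i _ => four_mul_mul_max_sub_le_sq μ (ξ i)
  rw [le_div_iff₀ (by positivity)]
  calc (∑ i, max (ξ i - μ) 0) * (4 * (1 - a) * μ)
      = (1 - a) * (4 * μ * ∑ i, max (ξ i - μ) 0) := by ring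
    _ ≤ (1 - a) * ∑ i, ξ i ^ 2 := mul_le_mul_of_nonneg_left hsum h1a.le
    _ ≤ 1 := hsq

lemma sum_le_one_div_sqrt {a : ℝ} (ha0 : 0 < a) (ha1 : a ≤ 1) {ξ : ι → ℝ}
    (hQ : ξ ⬝ᵥ compoundSymm ι a *ᵥ ξ ≤ 1) :
    ∑ i, ξ i ≤ 1 / √a := by
  rw [dotProduct_compoundSymm_mulVec] at hQ
  have h : ((∑ i, ξ i) * √a) ^ 2 ≤ 1 := by
    rw [mul_pow, Real.sq_sqrt ha0.le]
    nlinarith [Finset.sum_nonneg fun i (_ : i ∈ Finset.univ) => sq_nonneg (ξ i)]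
  rw [le_div_iff₀ (Real.sqrt_pos.2 ha0)]
  calc (∑ i, ξ i) * √a ≤ |(∑ i, ξ i) * √a| := le_abs_self _
    _ ≤ √1 := Real.abs_le_sqrt h
    _ = 1 := Real.sqrt_one

lemma sum_simplexVertex_some (μ ρ : ℝ) (i : ι) :
    ∑ j, simplexVertex μ ρ (some i) j = Fintype.card ι * μ + ρ := by
  simp [simplexVertex, Finset.sum_add_distrib, ← Finset.mul_sum]

lemma sum_sq_simplexVertex_some (μ ρ : ℝ) (i : ι) :
    ∑ j, simplexVertex μ ρ (some i) j ^ 2 = Fintype.card ι * μ ^ 2 + 2 * μ * ρ + ρ ^ 2 := by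
  simp [simplexVertex, Pi.single_apply, add_sq, Finset.sum_add_distrib]

lemma dotProduct_compoundSymm_mulVec_simplexVertex_le {a μ ρ : ℝ} (ha0 : 0 ≤ a) (ha1 : a ≤ 1)
    (hμ : 0 ≤ μ) (hρ : 0 ≤ ρ) (o : Option ι) :
    simplexVertex μ ρ o ⬝ᵥ compoundSymm ι a *ᵥ simplexVertex μ ρ o
      ≤ ρ ^ 2 + 2 * (1 - a + a * Fintype.card ι) * ρ * μ
        + (a * Fintype.card ι ^ 2 + (1 - a) * Fintype.card ι) * μ ^ 2 := by
  rw [dotProduct_compoundSymm_mulVec]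
  cases o with
  | none =>
    have hK : 0 ≤ 1 - a + a * Fintype.card ι := add_nonneg (sub_nonneg.2 ha1) (by positivity)
    simp only [simplexVertex, Option.elim_none, Finset.sum_const, Finset.card_univ, nsmul_eq_mul]
    nlinarith [sq_nonneg ρ, mul_nonneg (mul_nonneg hK hρ) hμ]
  | some i =>
    rw [sum_simplexVertex_some, sum_sq_simplexVertex_some]
    exact le_of_eq (by ring)

lemma add_mem_convexHull_simplexVertex {μ ρ : ℝ} (hρ : 0 < ρ) {w : ι → ℝ} (hw : ∀ i, 0 ≤ w i)
    (hw_sum : ∑ i, w i ≤ ρ) :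
    (fun i => w i + μ) ∈ convexHull ℝ (Set.range (simplexVertex (ι := ι) μ ρ)) := by
  set t : Option ι → ℝ := fun o => o.elim (1 - (∑ i, w i) / ρ) (fun i => w i / ρ)
  have ht_nonneg : ∀ o ∈ Finset.univ, 0 ≤ t o := by
    rintro (_ | i) -
    · simpa [t, div_le_one hρ] using hw_sum
    · exact div_nonneg (hw i) hρ.le
  have ht_sum : ∑ o, t o = 1 := by
    simp [t, Fintype.sum_option, ← Finset.sum_div]
  have hcomb : ∑ o, t o • simplexVertex μ ρ o = fun i => w i + μ := by
    ext j
    simp only [t, simplexVertex, Finset.sum_apply, Pi.smul_apply, smul_eq_mul, Fintype.sum_option,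
      Option.elim_none, Option.elim_some, Pi.add_apply, Pi.single_apply, mul_ite, mul_one, mul_zero,
      mul_add, div_mul_cancel₀ _ hρ.ne', Finset.sum_add_distrib, ← Finset.sum_mul,
      Finset.sum_ite_eq, Finset.mem_univ, if_true, ← Finset.sum_div]
    ring
  rw [← hcomb]
  exact (convex_convexHull ℝ _).sum_mem ht_nonneg ht_sum
    fun o _ => subset_convexHull ℝ _ ⟨o, rfl⟩

structure DominatingSimplexParams (ι : Type*) [Fintype ι] [DecidableEq ι] (a μ ρ β : ℝ) :
    Prop where
  μ_nonneg : 0 ≤ μ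
  ρ_pos : 0 < ρ
  β_pos : 0 < β
  sum_le : ∀ ξ ∈ nonnegEllipsoid ι a, ∑ i, max (ξ i - μ) 0 ≤ ρ
  bound_le : ρ ^ 2 + 2 * (1 - a + a * Fintype.card ι) * ρ * μ
    + (a * Fintype.card ι ^ 2 + (1 - a) * Fintype.card ι) * μ ^ 2 ≤ β ^ 2

namespace DominatingSimplexParams

variable {a μ ρ β : ℝ}

lemma mem_convexHull (hP : DominatingSimplexParams ι a μ ρ β) {ξ : ι → ℝ}
    (hξ : ξ ∈ nonnegEllipsoid ι a) :
    (fun i => max (ξ i - μ) 0 + μ) ∈ convexHull ℝ (Set.range (simplexVertex (ι := ι) μ ρ)) :=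
  add_mem_convexHull_simplexVertex hP.ρ_pos (fun _ => le_max_right _ _) (hP.sum_le ξ hξ)

lemma inv_smul_simplexVertex_mem (hP : DominatingSimplexParams ι a μ ρ β) (ha0 : 0 ≤ a)
    (ha1 : a ≤ 1) (o : Option ι) :
    β⁻¹ • simplexVertex μ ρ o ∈ nonnegEllipsoid ι a :=
  inv_smul_mem_nonnegEllipsoid hP.β_pos (simplexVertex_nonneg hP.μ_nonneg hP.ρ_pos.le o)
    ((dotProduct_compoundSymm_mulVec_simplexVertex_le ha0 ha1 hP.μ_nonneg hP.ρ_pos.le o).trans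
      hP.bound_le)

end DominatingSimplexParams

lemma sq_rpow_quarter_sq {x : ℝ} (hx : 0 ≤ x) : ((x ^ 2) ^ (1 / 4 : ℝ)) ^ 2 = x := by
  rw [← Real.rpow_mul_natCast (by positivity), show (1 / 4 : ℝ) * (2 : ℕ) = 1 / 2 by norm_num,
    ← Real.sqrt_eq_rpow, Real.sqrt_sq hx]

lemma balanced_bound_eq {c s μ ρ K : ℝ} (hμ : 4 * c * s * μ ^ 2 = 1)
    (hρ : ρ = 1 / (4 * c * μ)) :
    ρ ^ 2 + 2 * K * ρ * μ + s ^ 2 * μ ^ 2 = (s + K) / (2 * c) := by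
  have hc : c ≠ 0 := by rintro rfl; simp at hμ
  have hμ0 : μ ≠ 0 := by rintro rfl; simp at hμ
  subst hρ
  field_simp
  linear_combination 2 * (4 * c * s * μ ^ 2 - 1) * hμ

lemma dominatingSimplexParams_of_lt_one [Nonempty ι] {a : ℝ} (ha0 : 0 ≤ a) (ha1 : a < 1) :
    let m : ℝ := Fintype.card ι
    let μ := 1 / (2 * ((1 - a) ^ 3 * m + (1 - a) ^ 2 * a * m ^ 2) ^ ((1 : ℝ) / 4))
    DominatingSimplexParams ι a μ (1 / (4 * (1 - a) * μ))
      (√((1 / 2) * (1 + (1 / (1 - a)) * (a * m + √((1 - a) * m + a * m ^ 2))))) := by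
  intro m μ
  have hm : 0 < m := Nat.cast_pos.2 Fintype.card_pos
  have h1a : 0 < 1 - a := sub_pos.2 ha1
  set s := √((1 - a) * m + a * m ^ 2)
  have hs2 : s ^ 2 = (1 - a) * m + a * m ^ 2 := Real.sq_sqrt (by positivity)
  have hs : 0 < s := Real.sqrt_pos.2 (by positivity)
  have hμ : 0 < μ := by positivity
  have hμ2 : 4 * (1 - a) * s * μ ^ 2 = 1 := by
    have hD : (1 - a) ^ 3 * m + (1 - a) ^ 2 * a * m ^ 2 = ((1 - a) * s) ^ 2 := by
      rw [mul_pow, hs2]; ring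
    simp only [μ]
    rw [hD, div_pow, mul_pow, sq_rpow_quarter_sq (by positivity)]
    field_simp
    norm_num
  refine ⟨hμ.le, by positivity, by positivity,
    fun ξ hξ => sum_max_sub_le ha0 ha1 hμ hξ.2, ?_⟩
  rw [show (Fintype.card ι : ℝ) = m from rfl, Real.sq_sqrt (by positivity),
    show a * m ^ 2 + (1 - a) * m = s ^ 2 by rw [hs2]; ring, balanced_bound_eq hμ2 rfl]
  apply le_of_eq
  field_simp
  ring

lemma dominatingSimplexParams_of_pos {a : ℝ} (ha0 : 0 < a) (ha1 : a ≤ 1) :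
    DominatingSimplexParams ι a 0 (1 / √a) (1 / √a) := by
  refine ⟨le_rfl, by positivity, by positivity, fun ξ hξ => ?_, by simp⟩
  simp only [sub_zero, fun i => max_eq_left (hξ.1 i)]
  exact sum_le_one_div_sqrt ha0 ha1 hξ.2

end

/-- **Proposition (ellipsoid uncertainty).** For `Σ = (1−a)I + aJ` and
`U = {ξ ≥ 0 : ξᵀΣξ ≤ 1}`, with the case-dependent choices of `μ`, `ρ`, `β`:
(i) `Σᵢ (ξᵢ − μ)₊ ≤ ρ` on `U`, so `Û = conv(v₀,…,v_m)` dominates `U`;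
(ii) `ρ² + 2(1−a+am)ρμ + (am²+(1−a)m)μ² ≤ β²`, so `(1/β)·vᵢ ∈ U` for all `i`. -/
theorem stmt14 {m : ℕ} (hm : 2 ≤ m) (a : ℝ) (ha0 : 0 ≤ a) (ha1 : a ≤ 1) :
    let Sig : Matrix (Fin m) (Fin m) ℝ :=
      (1 - a) • (1 : Matrix (Fin m) (Fin m) ℝ) + a • (Matrix.of fun _ _ => (1 : ℝ))
    let U : Set (Fin m → ℝ) := {ξ | (∀ i, 0 ≤ ξ i) ∧ ξ ⬝ᵥ Sig.mulVec ξ ≤ 1}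
    let μ : ℝ := if a ≤ (m : ℝ) ^ (-(2 : ℝ) / 3) then
      1 / (2 * ((1 - a) ^ 3 * (m : ℝ) + (1 - a) ^ 2 * a * (m : ℝ) ^ 2) ^ ((1 : ℝ) / 4))
      else 0
    let ρ : ℝ := if a ≤ (m : ℝ) ^ (-(2 : ℝ) / 3) then 1 / (4 * (1 - a) * μ)
      else 1 / Real.sqrt a
    let β : ℝ := if a ≤ (m : ℝ) ^ (-(2 : ℝ) / 3) then
      Real.sqrt ((1 / 2) * (1 + (1 / (1 - a)) *
        (a * (m : ℝ) + Real.sqrt ((1 - a) * (m : ℝ) + a * (m : ℝ) ^ 2))))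
      else 1 / Real.sqrt a
    let v : Option (Fin m) → Fin m → ℝ :=
      fun o => o.elim (fun _ => μ) (fun i => (fun _ => μ) + ρ • (Pi.single i (1 : ℝ) : Fin m → ℝ))
    let h : (Fin m → ℝ) → Fin m → ℝ := fun ξ i => max (ξ i - μ) 0 + μ
    -- (i)
    (∀ ξ ∈ U, (∑ i, max (ξ i - μ) 0) ≤ ρ) ∧
    (∀ ξ ∈ U, (∀ i, ξ i ≤ h ξ i) ∧ h ξ ∈ convexHull ℝ (Set.range v)) ∧
    -- (ii)
    ρ ^ 2 + 2 * (1 - a + a * (m : ℝ)) * ρ * μ + (a * (m : ℝ) ^ 2 + (1 - a) * (m : ℝ)) * μ ^ 2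
      ≤ β ^ 2 ∧
    (∀ i, β⁻¹ • v i ∈ U) := by
  intro Sig U μ ρ β v h
  have hm1 : (1 : ℝ) < m := by exact_mod_cast hm
  have hP : DominatingSimplexParams (Fin m) a μ ρ β := by
    by_cases hc : a ≤ (m : ℝ) ^ (-(2 : ℝ) / 3)
    · have ha : a < 1 := hc.trans_lt (Real.rpow_lt_one_of_one_lt_of_neg hm1 (by norm_num))
      have : NeZero m := ⟨by omega⟩
      simpa only [μ, ρ, β, if_pos hc, Fintype.card_fin]
        using dominatingSimplexParams_of_lt_one (ι := Fin m) ha0 ha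
    · have ha : 0 < a := (Real.rpow_nonneg (by positivity) _).trans_lt (not_le.mp hc)
      simpa only [μ, ρ, β, if_neg hc] using dominatingSimplexParams_of_pos (ι := Fin m) ha ha1
  refine ⟨hP.sum_le, fun ξ hξ => ⟨fun i => sub_le_iff_le_add.1 (le_max_left _ _),
    hP.mem_convexHull hξ⟩, by simpa using hP.bound_le, hP.inv_smul_simplexVertex_mem ha0 ha1⟩
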